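/- The ΔIS estimator Î = (Z₊/Z)·(1/S₊) Σ_{s=1}^{S₊} f(x₊^{(s)}) p(x₊^{(s)})/q(x₊^{(s)}) − (Z₋/Z)·(1/S₋) Σ_{s=1}^{S₋} f(x₋^{(s)}) p(x₋^{(s)})/q(x₋^{(s)}), with x₊^{(s)} i.i.d. from q₊ and x₋^{(s)} i.i.d. from q₋ independently, is an unbiased estimator of I = E_{p}[f], i.e., E[Î] = I. -/

import Mathlib

/-!
Each sample `x₊⁽ˢ⁾` has law `q₊ dx`, so `E[w(x₊⁽ˢ⁾)] = ∫ q₊ w` for the importance weight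
`w = f p / q`, and likewise for `x₋⁽ˢ⁾`. Averaging over the samples and combining the two parts,
`E[Î] = ∫ (Z₊ q₊ − Z₋ q₋)/Z · w = ∫ q w = ∫ f p`; the last step uses that `q > 0` wherever
`f p ≠ 0`.
-/

open MeasureTheory

section WithDensity

variable {α : Type*} [MeasurableSpace α] {μ : Measure α} {q g : α → ℝ}

lemma integrable_mul_of_integrable_withDensity_ofReal (hq : AEMeasurable q μ)
    (hq_nonneg : 0 ≤ᵐ[μ] q) (hg : Integrable g (μ.withDensity fun x => ENNReal.ofReal (q x))) :
    Integrable (fun x => q x * g x) μ := by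
  rw [integrable_withDensity_iff_integrable_smul₀' hq.ennreal_ofReal
    (ae_of_all _ fun _ => ENNReal.ofReal_lt_top)] at hg
  refine hg.congr ?_
  filter_upwards [hq_nonneg] with x hx
  simp [ENNReal.toReal_ofReal hx]

lemma integral_withDensity_ofReal_eq_integral_mul (hq : AEMeasurable q μ)
    (hq_nonneg : 0 ≤ᵐ[μ] q) (g : α → ℝ) :
    ∫ x, g x ∂μ.withDensity (fun x => ENNReal.ofReal (q x)) = ∫ x, q x * g x ∂μ := by
  rw [integral_withDensity_eq_integral_toReal_smul₀ hq.ennreal_ofReal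
    (ae_of_all _ fun _ => ENNReal.ofReal_lt_top)]
  refine integral_congr_ae ?_
  filter_upwards [hq_nonneg] with x hx
  simp [ENNReal.toReal_ofReal hx]

end WithDensity

section IdenticallyDistributed

variable {Ω α ι : Type*} [MeasurableSpace Ω] [MeasurableSpace α] [Fintype ι]
  {P : Measure Ω} {ν : Measure α} {X : ι → Ω → α} {g : α → ℝ}

lemma integrable_sum_comp_of_map_eq (hX : ∀ i, AEMeasurable (X i) P)
    (hlaw : ∀ i, P.map (X i) = ν) (hg : Integrable g ν) :
    Integrable (fun ω => ∑ i, g (X i ω)) P :=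
  integrable_finsetSum _ fun i _ => ((hlaw i).symm ▸ hg).comp_aemeasurable (hX i)

lemma integral_sum_comp_of_map_eq (hX : ∀ i, AEMeasurable (X i) P)
    (hlaw : ∀ i, P.map (X i) = ν) (hg : Integrable g ν) :
    ∫ ω, ∑ i, g (X i ω) ∂P = Fintype.card ι * ∫ x, g x ∂ν := by
  rw [integral_finsetSum _ fun i _ => ((hlaw i).symm ▸ hg).comp_aemeasurable (hX i)]
  have hterm : ∀ i, ∫ ω, g (X i ω) ∂P = ∫ x, g x ∂ν := fun i => by
    rw [← integral_map (hX i) (by rw [hlaw i]; exact hg.aestronglyMeasurable), hlaw i]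
  simp [hterm]

end IdenticallyDistributed

theorem deltaIS_unbiased_general
    {D : ℕ} {Ω : Type*} [MeasureSpace Ω] (P : Measure Ω)
    (p f qp qm q : (Fin D → ℝ) → ℝ) (Zp Zm Z : ℝ) (Sp Sm : ℕ)
    (hSp : 1 ≤ Sp) (hSm : 1 ≤ Sm)
    -- the signed mixture proposal
    (hqp_nonneg : ∀ x, 0 ≤ qp x) (hqm_nonneg : ∀ x, 0 ≤ qm x)
    (hqp_meas : Measurable qp) (hqm_meas : Measurable qm)
    (hq : ∀ x, q x = (Zp * qp x - Zm * qm x) / Z)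
    (hsupp : ∀ x, f x * p x ≠ 0 → 0 < q x)
    -- laws of the samples
    (Xp : Fin Sp → Ω → (Fin D → ℝ)) (Xm : Fin Sm → Ω → (Fin D → ℝ))
    (hXp_meas : ∀ s, Measurable (Xp s)) (hXm_meas : ∀ s, Measurable (Xm s))
    (hXp_law : ∀ s, Measure.map (Xp s) P
      = volume.withDensity (fun x => ENNReal.ofReal (qp x)))
    (hXm_law : ∀ s, Measure.map (Xm s) P
      = volume.withDensity (fun x => ENNReal.ofReal (qm x)))
    -- integrability of the importance-weighted integrand under q₊ and q₋
    (hint_p : Integrable (fun x => f x * p x / q x)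
      (volume.withDensity (fun x => ENNReal.ofReal (qp x))))
    (hint_m : Integrable (fun x => f x * p x / q x)
      (volume.withDensity (fun x => ENNReal.ofReal (qm x)))) :
    ∫ ω, ((Zp / Z) * ((1 : ℝ) / Sp) * ∑ s, f (Xp s ω) * p (Xp s ω) / q (Xp s ω)
        - (Zm / Z) * ((1 : ℝ) / Sm) * ∑ s, f (Xm s ω) * p (Xm s ω) / q (Xm s ω)) ∂P
      = ∫ x, f x * p x := by
  set w : (Fin D → ℝ) → ℝ := fun x => f x * p x / q x
  have hXp := fun s => (hXp_meas s).aemeasurable (μ := P)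
  have hXm := fun s => (hXm_meas s).aemeasurable (μ := P)
  have hqp := hqp_meas.aemeasurable (μ := volume)
  have hqm := hqm_meas.aemeasurable (μ := volume)
  have hqp_nn : 0 ≤ᵐ[volume] qp := ae_of_all _ hqp_nonneg
  have hqm_nn : 0 ≤ᵐ[volume] qm := ae_of_all _ hqm_nonneg
  have hSp0 : (Sp : ℝ) ≠ 0 := by positivity
  have hSm0 : (Sm : ℝ) ≠ 0 := by positivity
  rw [integral_sub ((integrable_sum_comp_of_map_eq hXp hXp_law hint_p).const_mul _)
      ((integrable_sum_comp_of_map_eq hXm hXm_law hint_m).const_mul _),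
    integral_const_mul, integral_const_mul,
    integral_sum_comp_of_map_eq hXp hXp_law hint_p, integral_sum_comp_of_map_eq hXm hXm_law hint_m,
    integral_withDensity_ofReal_eq_integral_mul hqp hqp_nn,
    integral_withDensity_ofReal_eq_integral_mul hqm hqm_nn,
    Fintype.card_fin, Fintype.card_fin]
  calc _ = Zp / Z * (∫ x, qp x * w x) - Zm / Z * ∫ x, qm x * w x := by field_simp
    _ = ∫ x, q x * w x := by
      rw [← integral_const_mul, ← integral_const_mul, ← integral_sub
        ((integrable_mul_of_integrable_withDensity_ofReal hqp hqp_nn hint_p).const_mul _)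
        ((integrable_mul_of_integrable_withDensity_ofReal hqm hqm_nn hint_m).const_mul _)]
      congr 1 with x
      rw [hq]
      ring
    _ = ∫ x, f x * p x := by
      congr 1 with x
      exact mul_div_cancel_of_imp' fun hqx => by_contra fun hfp => (hsupp x hfp).ne' hqx

/-- **Unbiasedness of the ΔIS estimator.**
With samples `x₊⁽ˢ⁾ ∼ q₊` and `x₋⁽ˢ⁾ ∼ q₋`, the ΔIS estimator
`Î = (Z₊/Z)(1/S₊) Σ f(x₊)p(x₊)/q(x₊) − (Z₋/Z)(1/S₋) Σ f(x₋)p(x₋)/q(x₋)`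
satisfies `E[Î] = E_p[f]`. -/
theorem deltaIS_unbiased
    {D : ℕ} {Ω : Type*} [MeasureSpace Ω] (P : Measure Ω) [IsProbabilityMeasure P]
    (p f qp qm q : (Fin D → ℝ) → ℝ) (Zp Zm Z : ℝ) (Sp Sm : ℕ)
    (hSp : 1 ≤ Sp) (hSm : 1 ≤ Sm)
    -- p is a probability density and f is absolutely integrable against p
    (hp_nonneg : ∀ x, 0 ≤ p x) (hp_one : ∫ x, p x = 1)
    (hfp_int : Integrable (fun x => f x * p x))
    -- the signed mixture proposal
    (hqp_nonneg : ∀ x, 0 ≤ qp x) (hqm_nonneg : ∀ x, 0 ≤ qm x)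
    (hqp_meas : Measurable qp) (hqm_meas : Measurable qm)
    (hqp_one : ∫ x, qp x = 1) (hqm_one : ∫ x, qm x = 1)
    (hZdef : Z = Zp - Zm) (hZ : 0 < Z)
    (hq : ∀ x, q x = (Zp * qp x - Zm * qm x) / Z)
    (hsupp : ∀ x, f x * p x ≠ 0 → 0 < q x)
    -- laws of the samples
    (Xp : Fin Sp → Ω → (Fin D → ℝ)) (Xm : Fin Sm → Ω → (Fin D → ℝ))
    (hXp_meas : ∀ s, Measurable (Xp s)) (hXm_meas : ∀ s, Measurable (Xm s))
    (hXp_law : ∀ s, Measure.map (Xp s) P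
      = volume.withDensity (fun x => ENNReal.ofReal (qp x)))
    (hXm_law : ∀ s, Measure.map (Xm s) P
      = volume.withDensity (fun x => ENNReal.ofReal (qm x)))
    -- integrability of the importance-weighted integrand under q₊ and q₋
    (hint_p : Integrable (fun x => f x * p x / q x)
      (volume.withDensity (fun x => ENNReal.ofReal (qp x))))
    (hint_m : Integrable (fun x => f x * p x / q x)
      (volume.withDensity (fun x => ENNReal.ofReal (qm x)))) :
    ∫ ω, ((Zp / Z) * ((1 : ℝ) / Sp) * ∑ s, f (Xp s ω) * p (Xp s ω) / q (Xp s ω)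
        - (Zm / Z) * ((1 : ℝ) / Sm) * ∑ s, f (Xm s ω) * p (Xm s ω) / q (Xm s ω)) ∂P
      = ∫ x, f x * p x :=
  deltaIS_unbiased_general P p f qp qm q Zp Zm Z Sp Sm hSp hSm hqp_nonneg hqm_nonneg hqp_meas
    hqm_meas hq hsupp Xp Xm hXp_meas hXm_meas hXp_law hXm_law hint_p hint_m
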